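/- Let T be a perfect binary tree of height h = 3m with m ≥ 1. Then the minimum size of a maximal independent set of T equals (4·8^m + 3)/7; such a minimum-size maximal independent set consists of the root together with all vertices at heights h-1, h-4, h-7, ..., 2. -/

import Mathlib

/-- The perfect binary tree of height `h`, on vertex set `Fin (2^(h+1) - 1)`
with heap indexing: the children of vertex `i` are `2*i+1` and `2*i+2`. -/
def perfectBinaryTree (h : ℕ) : SimpleGraph (Fin (2 ^ (h + 1) - 1)) :=
  SimpleGraph.fromRel (fun i j => (j : ℕ) = 2 * (i : ℕ) + 1 ∨ (j : ℕ) = 2 * (i : ℕ) + 2)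

/-- The height of a vertex (in heap indexing) is `log₂ (v+1)`. -/
def heapHeight {n : ℕ} (v : Fin n) : ℕ := Nat.log 2 ((v : ℕ) + 1)

variable {V : Type*}

/-- A vertex cover of a graph: a set of vertices meeting every edge. -/
def SimpleGraph.IsVertexCover' (G : SimpleGraph V) (C : Finset V) : Prop :=
  ∀ ⦃u v : V⦄, G.Adj u v → u ∈ C ∨ v ∈ C

/-- A minimal vertex cover: no proper subset is a vertex cover. -/
def SimpleGraph.IsMinimalVertexCover (G : SimpleGraph V) (C : Finset V) : Prop :=
  G.IsVertexCover' C ∧ ∀ D : Finset V, D ⊂ C → ¬ G.IsVertexCover' D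

/-- The number of minimal vertex covers of a graph. -/
noncomputable def SimpleGraph.numMinimalVertexCovers (G : SimpleGraph V) : ℕ :=
  {C : Finset V | G.IsMinimalVertexCover C}.ncard

/-- The vertex cover number: smallest cardinality of a vertex cover. -/
noncomputable def SimpleGraph.vertexCoverNumber (G : SimpleGraph V) : ℕ :=
  sInf {k | ∃ C : Finset V, G.IsVertexCover' C ∧ C.card = k}

/-- An independent set: no two of its vertices are adjacent. -/
def SimpleGraph.IsIndepSet' (G : SimpleGraph V) (W : Finset V) : Prop :=
  ∀ u ∈ W, ∀ v ∈ W, ¬ G.Adj u v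

/-- A maximal independent set. -/
def SimpleGraph.IsMaximalIndepSet (G : SimpleGraph V) (W : Finset V) : Prop :=
  G.IsIndepSet' W ∧ ∀ D : Finset V, W ⊂ D → ¬ G.IsIndepSet' D

/-- The independence number: largest cardinality of an independent set. -/
noncomputable def SimpleGraph.indepNumber (G : SimpleGraph V) : ℕ :=
  sSup {k | ∃ W : Finset V, G.IsIndepSet' W ∧ W.card = k}

/-- The minimum size of a maximal independent set. -/
noncomputable def SimpleGraph.minMaximalIndepSetSize (G : SimpleGraph V) : ℕ :=
  sInf {k | ∃ W : Finset V, G.IsMaximalIndepSet W ∧ W.card = k}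

/-- The matching number: largest cardinality of a set of pairwise disjoint edges. -/
noncomputable def SimpleGraph.matchingNumber (G : SimpleGraph V) : ℕ :=
  sSup {k | ∃ M : Finset (Sym2 V), (↑M : Set (Sym2 V)) ⊆ G.edgeSet ∧
    ((↑M : Set (Sym2 V)).Pairwise fun e f => ∀ v : V, v ∈ e → v ∉ f) ∧ M.card = k}

/-!
Let `W` be a maximal independent set. For a vertex `v` whose subtree has depth `d`, bound
`#(W ∩ subtree v)` from below by `A d`, `B d` or `C d` according as `v ∈ W`, `v ∉ W` but some
child of `v` lies in `W`, or merely `v ∉ W`. Independence, and the fact that a child of a vertex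
outside `W` can only be dominated from below, give
`A (d+1) = 1 + 2 C d`, `B (d+1) = A d + min (A d) (B d)`, `C (d+1) = min (B (d+1)) (2 B d)`.
Three steps take `(a, a + 2, a - 1)` to `(8a - 3, 8a - 1, 8a - 4)`, so `A (3m) = (4 * 8 ^ m + 3) / 7`
and the root, which is in `W` or dominated by a child, gives `#W ≥ min (A (3m)) (B (3m)) = A (3m)`.
The root together with the levels `≡ 2 mod 3` attains this: it has no two adjacent levels, every
other level is adjacent to one of its levels, and its size is `1 + ∑ 2 ^ (3k + 2)`.
-/

open Finset

namespace SimpleGraph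

variable (G : SimpleGraph V)

theorem isMaximalIndepSet_iff_forall_exists_adj [DecidableEq V] {W : Finset V} :
    G.IsMaximalIndepSet W ↔ G.IsIndepSet' W ∧ ∀ x ∉ W, ∃ y ∈ W, G.Adj x y := by
  refine ⟨fun ⟨hW, hmax⟩ ↦ ⟨hW, fun x hx ↦ ?_⟩, fun ⟨hW, hdom⟩ ↦ ⟨hW, fun D hWD hD ↦ ?_⟩⟩
  · by_contra! hx'
    refine hmax (insert x W) (ssubset_insert hx) ?_
    simp only [IsIndepSet', mem_insert]
    rintro u (rfl | hu) w (rfl | hw)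
    exacts [G.irrefl, hx' w hw, fun h ↦ hx' u hu h.symm, hW u hu w hw]
  · obtain ⟨x, hxD, hxW⟩ := exists_of_ssubset hWD
    obtain ⟨y, hyW, hxy⟩ := hdom x hxW
    exact hD x hxD y (hWD.subset hyW) hxy

theorem minMaximalIndepSetSize_eq {S : Finset V} (hS : G.IsMaximalIndepSet S)
    (hmin : ∀ W, G.IsMaximalIndepSet W → #S ≤ #W) : G.minMaximalIndepSetSize = #S :=
  le_antisymm (Nat.sInf_le ⟨S, hS, rfl⟩) <|
    le_csInf ⟨_, S, hS, rfl⟩ fun _ ⟨W, hW, hk⟩ ↦ hk ▸ hmin W hW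

end SimpleGraph

theorem Nat.div_two_pow_succ_eq_iff {m p k : ℕ} :
    m / 2 ^ (k + 1) = p ↔ m / 2 ^ k = 2 * p ∨ m / 2 ^ k = 2 * p + 1 := by
  rw [pow_succ, ← Nat.div_div_eq_div_mul]
  omega

section HeapIndexing

variable {n h : ℕ}

theorem heapHeight_eq_iff {v : Fin n} {t : ℕ} :
    heapHeight v = t ↔ 2 ^ t ≤ (v : ℕ) + 1 ∧ (v : ℕ) + 1 < 2 ^ (t + 1) :=
  Nat.log_eq_iff (Or.inr ⟨one_lt_two, Nat.succ_ne_zero _⟩)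

theorem pow_heapHeight_le (v : Fin n) : 2 ^ heapHeight v ≤ (v : ℕ) + 1 :=
  (heapHeight_eq_iff.1 rfl).1

theorem lt_pow_heapHeight_succ (v : Fin n) : (v : ℕ) + 1 < 2 ^ (heapHeight v + 1) :=
  (heapHeight_eq_iff.1 rfl).2

theorem heapHeight_le (v : Fin (2 ^ (h + 1) - 1)) : heapHeight v ≤ h :=
  Nat.lt_succ_iff.1 <| Nat.log_lt_of_lt_pow (Nat.succ_ne_zero _) (by have := v.isLt; omega)

theorem card_filter_heapHeight_eq {t : ℕ} (ht : t ≤ h) :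
    #{v : Fin (2 ^ (h + 1) - 1) | heapHeight v = t} = 2 ^ t := by
  have hlevel : ({v | heapHeight v = t} : Finset (Fin (2 ^ (h + 1) - 1))) =
      ({v | (v : ℕ) < 2 ^ (t + 1) - 1} : Finset (Fin (2 ^ (h + 1) - 1))) \
        ({v | (v : ℕ) < 2 ^ t - 1} : Finset (Fin (2 ^ (h + 1) - 1))) := by
    ext v
    have := Nat.one_le_two_pow (n := t)
    simp only [mem_filter, mem_sdiff, mem_univ, true_and, heapHeight_eq_iff, pow_succ]
    omega
  have hpow : 2 ^ (t + 1) ≤ 2 ^ (h + 1) := Nat.pow_le_pow_right two_pos (by omega)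
  rw [hlevel, card_sdiff_of_subset (monotone_filter_right _ fun v hv ↦ by omega),
    Fin.card_filter_val_lt, Fin.card_filter_val_lt, pow_succ]
  have := Nat.one_le_two_pow (n := t)
  omega

theorem card_filter_heapHeight (P : ℕ → Prop) [DecidablePred P] :
    #{v : Fin (2 ^ (h + 1) - 1) | P (heapHeight v)} = ∑ t ∈ range (h + 1) with P t, 2 ^ t := by
  rw [card_eq_sum_card_fiberwise (f := heapHeight) (t := (range (h + 1)).filter P)]
  · refine sum_congr rfl fun t ht ↦ ?_
    rw [mem_filter, mem_range] at ht
    rw [← card_filter_heapHeight_eq (Nat.lt_succ_iff.1 ht.1), filter_filter]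
    exact congrArg card (filter_congr fun v _ ↦ ⟨And.right, fun hv ↦ ⟨hv ▸ ht.2, hv⟩⟩)
  · intro v hv
    simp only [coe_filter, mem_univ, true_and, Set.mem_ofPred_eq] at hv ⊢
    exact ⟨mem_range.2 (Nat.lt_succ_of_le (heapHeight_le v)), hv⟩

end HeapIndexing

namespace PerfectBinaryTree

variable {n h : ℕ}

def IsChild (c p : Fin n) : Prop :=
  (c : ℕ) = 2 * p + 1 ∨ (c : ℕ) = 2 * p + 2

theorem IsChild.heapHeight_eq {c p : Fin n} (hcp : IsChild c p) :
    heapHeight c = heapHeight p + 1 := by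
  have := pow_heapHeight_le p
  have := lt_pow_heapHeight_succ p
  rw [heapHeight_eq_iff, pow_succ, pow_succ]
  unfold IsChild at hcp
  omega

theorem IsChild.unique {c p q : Fin n} (hp : IsChild c p) (hq : IsChild c q) : p = q := by
  unfold IsChild at hp hq
  exact Fin.ext (by omega)

theorem not_isChild_of_val_eq_zero {c p : Fin n} (hc : (c : ℕ) = 0) : ¬ IsChild c p := by
  unfold IsChild
  omega

theorem exists_isChild_of_heapHeight_pos {c : Fin n} (hc : 0 < heapHeight c) :
    ∃ p, IsChild c p := by
  have : 2 ≤ (c : ℕ) + 1 := le_trans (Nat.le_self_pow hc.ne' 2) (pow_heapHeight_le c)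
  refine ⟨⟨((c : ℕ) - 1) / 2, by omega⟩, ?_⟩
  dsimp only [IsChild]
  omega

theorem exists_children {p : Fin (2 ^ (h + 1) - 1)} (hp : heapHeight p < h) :
    ∃ l r : Fin (2 ^ (h + 1) - 1), (l : ℕ) = 2 * p + 1 ∧ (r : ℕ) = 2 * p + 2 := by
  have hpow : 2 ^ (heapHeight p + 1) ≤ 2 ^ h := Nat.pow_le_pow_right two_pos hp
  have := lt_pow_heapHeight_succ p
  have : 2 * (p : ℕ) + 2 < 2 ^ (h + 1) - 1 := by rw [pow_succ] at *; omega
  exact ⟨⟨2 * p + 1, by omega⟩, ⟨2 * p + 2, this⟩, rfl, rfl⟩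

/-- In heap indexing the ancestor of `u` that lies `k` levels higher is `(u + 1) / 2 ^ k - 1`. -/
def descendants (v : Fin n) : Finset (Fin n) :=
  {u | heapHeight v ≤ heapHeight u ∧
    ((u : ℕ) + 1) / 2 ^ (heapHeight u - heapHeight v) = (v : ℕ) + 1}

theorem descendants_eq_univ {v : Fin n} (hv : (v : ℕ) = 0) : descendants v = univ := by
  have hv0 : heapHeight v = 0 := by simp [heapHeight, hv]
  refine eq_univ_of_forall fun u ↦ ?_
  have := pow_heapHeight_le u
  have := lt_pow_heapHeight_succ u
  rw [descendants, mem_filter, hv0, hv, Nat.sub_zero]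
  exact ⟨mem_univ u, Nat.zero_le _, Nat.div_eq_of_lt_le (by omega) (by rw [pow_succ] at *; omega)⟩

theorem descendants_eq_singleton {v : Fin (2 ^ (h + 1) - 1)} (hv : heapHeight v = h) :
    descendants v = {v} := by
  ext u
  have := heapHeight_le u
  simp only [descendants, mem_filter, mem_univ, true_and, mem_singleton]
  refine ⟨fun ⟨hle, hu⟩ ↦ Fin.ext ?_, fun hu ↦ hu ▸ ⟨le_rfl, by simp⟩⟩
  rw [show heapHeight u - heapHeight v = 0 by omega, pow_zero, Nat.div_one] at hu
  omega

theorem notMem_descendants_of_heapHeight_lt {u v : Fin n} (huv : heapHeight u < heapHeight v) :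
    u ∉ descendants v := by
  simp only [descendants, mem_filter, not_and]
  exact fun _ hle ↦ absurd hle (not_le.2 huv)

section Children

variable {v l r : Fin n}

theorem mem_descendants_iff (hl : (l : ℕ) = 2 * v + 1) (hr : (r : ℕ) = 2 * v + 2) {u : Fin n} :
    u ∈ descendants v ↔ u = v ∨ u ∈ descendants l ∨ u ∈ descendants r := by
  have hhl : heapHeight l = heapHeight v + 1 := IsChild.heapHeight_eq (Or.inl hl)
  have hhr : heapHeight r = heapHeight v + 1 := IsChild.heapHeight_eq (Or.inr hr)
  rcases eq_or_ne u v with rfl | huv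
  · simp [descendants]
  simp only [descendants, mem_filter, mem_univ, true_and, hhl, hhr, huv, false_or]
  rcases Nat.lt_or_ge (heapHeight v) (heapHeight u) with hlt | hle
  · obtain ⟨k, hk⟩ := Nat.exists_eq_add_of_lt hlt
    rw [hk, show heapHeight v + k + 1 - heapHeight v = k + 1 by omega,
      show heapHeight v + k + 1 - (heapHeight v + 1) = k by omega, Nat.div_two_pow_succ_eq_iff]
    omega
  · rw [Nat.sub_eq_zero_of_le hle, pow_zero, Nat.div_one]
    have := Fin.val_ne_of_ne huv
    omega

theorem disjoint_descendants (hl : (l : ℕ) = 2 * v + 1) (hr : (r : ℕ) = 2 * v + 2) :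
    Disjoint (descendants l) (descendants r) := by
  have hhl : heapHeight l = heapHeight v + 1 := IsChild.heapHeight_eq (Or.inl hl)
  have hhr : heapHeight r = heapHeight v + 1 := IsChild.heapHeight_eq (Or.inr hr)
  simp only [disjoint_left, descendants, mem_filter, mem_univ, true_and, hhl, hhr]
  omega

theorem card_inter_descendants (hl : (l : ℕ) = 2 * v + 1) (hr : (r : ℕ) = 2 * v + 2)
    (W : Finset (Fin n)) :
    #(W ∩ descendants v) =
      (if v ∈ W then 1 else 0) + #(W ∩ descendants l) + #(W ∩ descendants r) := by
  have hdesc : descendants v = insert v (descendants l ∪ descendants r) := by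
    ext u
    rw [mem_insert, mem_union, mem_descendants_iff hl hr]
  have hv : v ∉ descendants l ∪ descendants r := by
    rw [mem_union, not_or]
    exact ⟨notMem_descendants_of_heapHeight_lt (IsChild.heapHeight_eq (Or.inl hl) ▸ lt_add_one _),
      notMem_descendants_of_heapHeight_lt (IsChild.heapHeight_eq (Or.inr hr) ▸ lt_add_one _)⟩
  have hunion : #(W ∩ (descendants l ∪ descendants r)) =
      #(W ∩ descendants l) + #(W ∩ descendants r) := by
    rw [inter_union_distrib_left, card_union_of_disjoint
      ((disjoint_descendants hl hr).mono inter_subset_right inter_subset_right)]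
  split_ifs with hvW
  · rw [hdesc, inter_insert_of_mem hvW, card_insert_of_notMem fun h ↦ hv (mem_of_mem_inter_right h),
      hunion]
    ring
  · rw [hdesc, inter_insert_of_notMem hvW, hunion, zero_add]

end Children

end PerfectBinaryTree

open PerfectBinaryTree

theorem perfectBinaryTree_adj {h : ℕ} {u v : Fin (2 ^ (h + 1) - 1)} :
    (perfectBinaryTree h).Adj u v ↔ IsChild v u ∨ IsChild u v := by
  rw [perfectBinaryTree, SimpleGraph.fromRel_adj]
  refine ⟨And.right, fun huv ↦ ⟨fun hne ↦ ?_, huv⟩⟩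
  subst hne
  unfold IsChild at huv
  omega

theorem isMaximalIndepSet_filter_heapHeight {h : ℕ} (P : ℕ → Prop) [DecidablePred P]
    (hindep : ∀ t, P t → ¬ P (t + 1))
    (hdom : ∀ t ≤ h, ¬ P t → 0 < t ∧ P (t - 1) ∨ t < h ∧ P (t + 1)) :
    (perfectBinaryTree h).IsMaximalIndepSet {v | P (heapHeight v)} := by
  refine (SimpleGraph.isMaximalIndepSet_iff_forall_exists_adj _).2 ⟨?_, fun x hx ↦ ?_⟩
  · simp only [SimpleGraph.IsIndepSet', mem_filter, mem_univ, true_and, perfectBinaryTree_adj]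
    rintro u hu v hv (hvu | huv)
    · exact hindep _ hu (hvu.heapHeight_eq ▸ hv)
    · exact hindep _ hv (huv.heapHeight_eq ▸ hu)
  simp only [mem_filter, mem_univ, true_and] at hx ⊢
  rcases hdom _ (heapHeight_le x) hx with ⟨hpos, hparent⟩ | ⟨hlt, hchild⟩
  · obtain ⟨p, hxp⟩ := exists_isChild_of_heapHeight_pos hpos
    refine ⟨p, ?_, perfectBinaryTree_adj.2 (Or.inr hxp)⟩
    rwa [hxp.heapHeight_eq, Nat.add_sub_cancel] at hparent
  · obtain ⟨l, -, hl, -⟩ := exists_children hlt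
    have hlx : IsChild l x := Or.inl hl
    exact ⟨l, hlx.heapHeight_eq ▸ hchild, perfectBinaryTree_adj.2 (Or.inl hlx)⟩

namespace PerfectBinaryTree

variable {h : ℕ} {W : Finset (Fin (2 ^ (h + 1) - 1))}

theorem exists_isChild_mem_of_notMem (hW : (perfectBinaryTree h).IsMaximalIndepSet W)
    {x : Fin (2 ^ (h + 1) - 1)} (hxW : x ∉ W) (hparent : ∀ p, IsChild x p → p ∉ W) :
    ∃ y ∈ W, IsChild y x := by
  obtain ⟨y, hyW, hxy⟩ := ((SimpleGraph.isMaximalIndepSet_iff_forall_exists_adj _).1 hW).2 x hxW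
  rcases perfectBinaryTree_adj.1 hxy with hyx | hxy
  · exact ⟨y, hyW, hyx⟩
  · exact absurd hyW (hparent y hxy)

theorem exists_isChild_mem_of_parent_notMem (hW : (perfectBinaryTree h).IsMaximalIndepSet W)
    {x v : Fin (2 ^ (h + 1) - 1)} (hxv : IsChild x v) (hvW : v ∉ W) (hxW : x ∉ W) :
    ∃ y ∈ W, IsChild y x :=
  exists_isChild_mem_of_notMem hW hxW fun _ hxp ↦ hxp.unique hxv ▸ hvW

def IsSubtreeBound (W : Finset (Fin (2 ^ (h + 1) - 1))) (d a b c : ℕ) : Prop :=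
  ∀ v, heapHeight v + d = h →
    (v ∈ W → a ≤ #(W ∩ descendants v)) ∧
    (v ∉ W → (∃ y ∈ W, IsChild y v) → b ≤ #(W ∩ descendants v)) ∧
    (v ∉ W → c ≤ #(W ∩ descendants v))

theorem IsSubtreeBound.mono {d a b c a' b' c' : ℕ} (hB : IsSubtreeBound W d a b c)
    (ha : a' ≤ a) (hb : b' ≤ b) (hc : c' ≤ c) : IsSubtreeBound W d a' b' c' := fun v hv ↦
  ⟨fun hvW ↦ ha.trans ((hB v hv).1 hvW), fun hvW hy ↦ hb.trans ((hB v hv).2.1 hvW hy),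
    fun hvW ↦ hc.trans ((hB v hv).2.2 hvW)⟩

theorem isSubtreeBound_zero (b : ℕ) : IsSubtreeBound W 0 1 b 0 := by
  intro v hv
  rw [descendants_eq_singleton hv]
  refine ⟨fun hvW ↦ by simp [hvW], fun _ ⟨y, _, hyv⟩ ↦ ?_, fun _ ↦ Nat.zero_le _⟩
  have := hyv.heapHeight_eq ▸ heapHeight_le y
  omega

theorem IsSubtreeBound.min_le_card_inter_descendants
    (hW : (perfectBinaryTree h).IsMaximalIndepSet W) {d a b c : ℕ} (hB : IsSubtreeBound W d a b c)
    {x v : Fin (2 ^ (h + 1) - 1)} (hx : heapHeight x + d = h) (hxv : IsChild x v) (hvW : v ∉ W) :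
    min a b ≤ #(W ∩ descendants x) := by
  by_cases hxW : x ∈ W
  · exact (min_le_left _ _).trans ((hB x hx).1 hxW)
  · exact (min_le_right _ _).trans
      ((hB x hx).2.1 hxW (exists_isChild_mem_of_parent_notMem hW hxv hvW hxW))

theorem IsSubtreeBound.succ (hW : (perfectBinaryTree h).IsMaximalIndepSet W) {d a b c : ℕ}
    (hB : IsSubtreeBound W d a b c) :
    IsSubtreeBound W (d + 1) (1 + 2 * c) (a + min a b) (min (a + min a b) (2 * b)) := by
  intro v hv
  obtain ⟨l, r, hl, hr⟩ := exists_children (show heapHeight v < h by omega)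
  have hlv : IsChild l v := Or.inl hl
  have hrv : IsChild r v := Or.inr hr
  have hdl : heapHeight l + d = h := by rw [hlv.heapHeight_eq]; omega
  have hdr : heapHeight r + d = h := by rw [hrv.heapHeight_eq]; omega
  have hcard := card_inter_descendants hl hr W
  have hdominated : v ∉ W → (∃ y ∈ W, IsChild y v) → a + min a b ≤ #(W ∩ descendants v) := by
    rintro hvW ⟨y, hyW, hyv⟩
    have := hB.min_le_card_inter_descendants hW hdl hlv hvW
    have := hB.min_le_card_inter_descendants hW hdr hrv hvW
    rw [hcard, if_neg hvW]
    rcases hyv with hy | hy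
    · have := (hB l hdl).1 (Fin.ext (hy.trans hl.symm) ▸ hyW)
      omega
    · have := (hB r hdr).1 (Fin.ext (hy.trans hr.symm) ▸ hyW)
      omega
  refine ⟨fun hvW ↦ ?_, hdominated, fun hvW ↦ ?_⟩
  · have hlW : l ∉ W := fun hlW ↦ hW.1 v hvW l hlW (perfectBinaryTree_adj.2 (Or.inl hlv))
    have hrW : r ∉ W := fun hrW ↦ hW.1 v hvW r hrW (perfectBinaryTree_adj.2 (Or.inl hrv))
    have := (hB l hdl).2.2 hlW
    have := (hB r hdr).2.2 hrW
    rw [hcard, if_pos hvW]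
    omega
  · by_cases hy : ∃ y ∈ W, IsChild y v
    · exact (min_le_left _ _).trans (hdominated hvW hy)
    have hlW : l ∉ W := fun hlW ↦ hy ⟨l, hlW, hlv⟩
    have hrW : r ∉ W := fun hrW ↦ hy ⟨r, hrW, hrv⟩
    have := (hB l hdl).2.1 hlW (exists_isChild_mem_of_parent_notMem hW hlv hvW hlW)
    have := (hB r hdr).2.1 hrW (exists_isChild_mem_of_parent_notMem hW hrv hvW hrW)
    rw [hcard, if_neg hvW]
    omega

theorem isSubtreeBound_three_mul (hW : (perfectBinaryTree h).IsMaximalIndepSet W) (m : ℕ) :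
    ∃ a, 7 * a = 4 * 8 ^ m + 3 ∧ IsSubtreeBound W (3 * m) a (a + 2) (a - 1) := by
  induction m with
  | zero => exact ⟨1, rfl, isSubtreeBound_zero 3⟩
  | succ m ih =>
    obtain ⟨a, ha, hB⟩ := ih
    have : 1 ≤ 8 ^ m := Nat.one_le_pow _ _ (by norm_num)
    exact ⟨8 * a - 3, by rw [pow_succ]; omega,
      (((hB.succ hW).succ hW).succ hW).mono (by omega) (by omega) (by omega)⟩

theorem min_le_card_of_isSubtreeBound (hW : (perfectBinaryTree h).IsMaximalIndepSet W)
    {a b c : ℕ} (hB : IsSubtreeBound W h a b c) : min a b ≤ #W := by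
  have hpos : 0 < 2 ^ (h + 1) - 1 := by
    have := Nat.one_lt_two_pow (Nat.succ_ne_zero h)
    omega
  let root : Fin (2 ^ (h + 1) - 1) := ⟨0, hpos⟩
  have hroot : heapHeight root + h = h := by simp [root, heapHeight]
  have hB' := hB root hroot
  rw [descendants_eq_univ rfl, inter_univ] at hB'
  by_cases hrW : root ∈ W
  · exact (min_le_left _ _).trans (hB'.1 hrW)
  · exact (min_le_right _ _).trans (hB'.2.1 hrW (exists_isChild_mem_of_notMem hW hrW
      fun _ h ↦ absurd h (not_isChild_of_val_eq_zero rfl)))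

theorem four_mul_eight_pow_add_three_le_card {m : ℕ} {W : Finset (Fin (2 ^ (3 * m + 1) - 1))}
    (hW : (perfectBinaryTree (3 * m)).IsMaximalIndepSet W) : 4 * 8 ^ m + 3 ≤ 7 * #W := by
  obtain ⟨a, ha, hB⟩ := isSubtreeBound_three_mul hW m
  have := min_le_card_of_isSubtreeBound hW hB
  omega

end PerfectBinaryTree

theorem seven_mul_sum_filter_pow_two (m : ℕ) :
    7 * ∑ t ∈ range (3 * m + 1) with (t = 0 ∨ t % 3 = 2), 2 ^ t = 4 * 8 ^ m + 3 := by
  induction m with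
  | zero => rfl
  | succ m ih =>
    have hpow : 2 ^ (3 * m + 2) = 4 * 8 ^ m := by rw [pow_add, pow_mul, mul_comm]; rfl
    rw [sum_filter] at ih ⊢
    rw [show 3 * (m + 1) + 1 = 3 * m + 1 + 1 + 1 + 1 by ring, sum_range_succ, sum_range_succ,
      sum_range_succ, if_neg (by omega), if_pos (by omega), if_neg (by omega), pow_succ 8]
    omega

theorem minMaximalIndepSetSize_perfectBinaryTree_height_three_mul_general (m : ℕ) :
    7 * (perfectBinaryTree (3 * m)).minMaximalIndepSetSize = 4 * 8 ^ m + 3 ∧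
    ((perfectBinaryTree (3 * m)).IsMaximalIndepSet
        (Finset.univ.filter (fun v : Fin (2 ^ (3 * m + 1) - 1) =>
          heapHeight v = 0 ∨ (heapHeight v % 3 = 2 ∧ heapHeight v ≤ 3 * m - 1))) ∧
      (Finset.univ.filter (fun v : Fin (2 ^ (3 * m + 1) - 1) =>
          heapHeight v = 0 ∨ (heapHeight v % 3 = 2 ∧ heapHeight v ≤ 3 * m - 1))).card =
        (perfectBinaryTree (3 * m)).minMaximalIndepSetSize) := by
  set S := Finset.univ.filter (fun v : Fin (2 ^ (3 * m + 1) - 1) =>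
    heapHeight v = 0 ∨ (heapHeight v % 3 = 2 ∧ heapHeight v ≤ 3 * m - 1))
  have hS : (perfectBinaryTree (3 * m)).IsMaximalIndepSet S :=
    isMaximalIndepSet_filter_heapHeight (fun t ↦ t = 0 ∨ (t % 3 = 2 ∧ t ≤ 3 * m - 1))
      (fun _ ↦ by omega) (fun _ _ _ ↦ by omega)
  have hcard : 7 * #S = 4 * 8 ^ m + 3 := by
    have hheights : {t ∈ range (3 * m + 1) | t = 0 ∨ (t % 3 = 2 ∧ t ≤ 3 * m - 1)} =
        {t ∈ range (3 * m + 1) | t = 0 ∨ t % 3 = 2} :=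
      filter_congr fun t ht ↦ by rw [mem_range] at ht; omega
    rw [← seven_mul_sum_filter_pow_two m, ← hheights, ← card_filter_heapHeight]
  have hmin : (perfectBinaryTree (3 * m)).minMaximalIndepSetSize = #S :=
    SimpleGraph.minMaximalIndepSetSize_eq _ hS fun W hW ↦ by
      have := PerfectBinaryTree.four_mul_eight_pow_add_three_le_card hW
      omega
  exact ⟨hmin ▸ hcard, hS, hmin.symm⟩

/-- For a perfect binary tree of height h = 3m (m >= 1), the minimum size of a
maximal independent set is (4*8^m + 3)/7, attained by the set consisting of
the root together with all vertices at heights h-1, h-4, ..., 2 (i.e. the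
vertices whose height is congruent to 2 mod 3 and at most h-1). -/
theorem minMaximalIndepSetSize_perfectBinaryTree_height_three_mul (m : ℕ) (hm : 1 ≤ m) :
    7 * (perfectBinaryTree (3 * m)).minMaximalIndepSetSize = 4 * 8 ^ m + 3 ∧
    ((perfectBinaryTree (3 * m)).IsMaximalIndepSet
        (Finset.univ.filter (fun v : Fin (2 ^ (3 * m + 1) - 1) =>
          heapHeight v = 0 ∨ (heapHeight v % 3 = 2 ∧ heapHeight v ≤ 3 * m - 1))) ∧
      (Finset.univ.filter (fun v : Fin (2 ^ (3 * m + 1) - 1) =>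
          heapHeight v = 0 ∨ (heapHeight v % 3 = 2 ∧ heapHeight v ≤ 3 * m - 1))).card =
        (perfectBinaryTree (3 * m)).minMaximalIndepSetSize) :=
  minMaximalIndepSetSize_perfectBinaryTree_height_three_mul_general m
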